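/- arXiv:1606.03998 — 3 statements merged into one kernel-verified Lean document; each statement's English description precedes it below -/
import Mathlib

section
/- For x ∈ S^m with x ≠ ±c, the intrinsic (geodesic) distance from x to the subsphere [c,r] equals |arccos(x·c) − r|, i.e., inf over y ∈ [c,r] of arccos(x·y) = |arccos(x·c) − r|. -/
/-!
Write `θ` for the angle between `x` and `c`. Every `y ∈ [c,r]` makes angle `r` with `c`, so the
triangle inequality for angles gives `∠(x,y) ≥ |θ - r|`. Conversely, since `x ≠ ±c`, the vector
`x` lies on a unique great circle through `c`, `x = cos θ • c + sin θ • u` with `u ⊥ c` a unit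
vector, and the point `cos r • c + sin r • u` of this circle lies in `[c,r]` at angle `|θ - r|`
from `x`.
-/

open RealInnerProductSpace Real

namespace InnerProductGeometry

variable {V : Type*} [NormedAddCommGroup V] [InnerProductSpace ℝ V]

lemma angle_eq_arccos_inner_of_norm_eq_one {x y : V} (hx : ‖x‖ = 1) (hy : ‖y‖ = 1) :
    angle x y = arccos ⟪x, y⟫ := by
  simp [angle, hx, hy]

lemma abs_angle_sub_angle_le (x y z : V) : |angle x z - angle y z| ≤ angle x y :=
  abs_sub_le_iff.2
    ⟨by linarith [angle_le_angle_add_angle x y z],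
      by linarith [angle_le_angle_add_angle y x z, angle_comm x y]⟩

/-- For orthonormal `c`, `u`: the unit-speed great circle through `c` in the direction `u`. -/
noncomputable def greatCircle (c u : V) (a : ℝ) : V := cos a • c + sin a • u

lemma inner_greatCircle {c u : V} (hc : ‖c‖ = 1) (hu : ‖u‖ = 1) (hcu : ⟪c, u⟫ = 0) (a b : ℝ) :
    ⟪greatCircle c u a, greatCircle c u b⟫ = cos (a - b) := by
  have hcc : ⟪c, c⟫ = 1 := by rw [real_inner_self_eq_norm_sq, hc, one_pow]
  have huu : ⟪u, u⟫ = 1 := by rw [real_inner_self_eq_norm_sq, hu, one_pow]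
  have huc : ⟪u, c⟫ = 0 := by rw [real_inner_comm, hcu]
  simp only [greatCircle, inner_add_left, inner_add_right, real_inner_smul_left,
    real_inner_smul_right, hcc, huu, hcu, huc, cos_sub]
  ring

lemma norm_greatCircle {c u : V} (hc : ‖c‖ = 1) (hu : ‖u‖ = 1) (hcu : ⟪c, u⟫ = 0) (a : ℝ) :
    ‖greatCircle c u a‖ = 1 := by
  have h := inner_greatCircle hc hu hcu a a
  rwa [sub_self, cos_zero, real_inner_self_eq_norm_sq,
    pow_eq_one_iff_of_nonneg (norm_nonneg _) two_ne_zero] at h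

lemma inner_greatCircle_left {c u : V} (hc : ‖c‖ = 1) (hcu : ⟪c, u⟫ = 0) (a : ℝ) :
    ⟪greatCircle c u a, c⟫ = cos a := by
  have hcc : ⟪c, c⟫ = 1 := by rw [real_inner_self_eq_norm_sq, hc, one_pow]
  rw [greatCircle, inner_add_left, real_inner_smul_left, real_inner_smul_left, hcc,
    real_inner_comm, hcu]
  ring

lemma norm_sub_cos_angle_smul_of_norm_eq_one {x c : V} (hx : ‖x‖ = 1) (hc : ‖c‖ = 1) :
    ‖x - cos (angle x c) • c‖ = sin (angle x c) := by
  have hxc := inner_eq_cos_angle_of_norm_eq_one hx hc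
  have hsq : ‖x - cos (angle x c) • c‖ ^ 2 = sin (angle x c) ^ 2 := by
    rw [@norm_sub_sq_real, norm_smul, real_inner_smul_right, ← hxc, hx, hc, Real.norm_eq_abs,
      mul_one, sq_abs, sin_sq, hxc]
    ring
  exact (sq_eq_sq₀ (norm_nonneg _) (sin_angle_nonneg x c)).1 hsq

lemma exists_eq_greatCircle_angle {x c : V} (hx : ‖x‖ = 1) (hc : ‖c‖ = 1) (hxc : x ≠ c)
    (hxc' : x ≠ -c) :
    ∃ u : V, ‖u‖ = 1 ∧ ⟪c, u⟫ = 0 ∧ x = greatCircle c u (angle x c) := by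
  set v := x - cos (angle x c) • c with hv
  have hnorm_v : ‖v‖ = sin (angle x c) := norm_sub_cos_angle_smul_of_norm_eq_one hx hc
  have hsin : sin (angle x c) ≠ 0 := by
    rw [Ne, sin_eq_zero_iff_angle_eq_zero_or_angle_eq_pi, not_or]
    refine ⟨fun h => hxc (eq_of_angle_eq_zero_of_norm_eq h (hx.trans hc.symm)),
      fun h => hxc' (eq_of_angle_eq_zero_of_norm_eq ?_ (by rw [norm_neg, hx, hc]))⟩
    rw [angle_neg_right, h, sub_self]
  have hv0 : v ≠ 0 := norm_ne_zero_iff.1 (hnorm_v ▸ hsin)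
  have hcv : ⟪c, v⟫ = 0 := by
    rw [hv, inner_sub_right, real_inner_smul_right, real_inner_comm,
      inner_eq_cos_angle_of_norm_eq_one hx hc, real_inner_self_eq_norm_sq, hc]
    ring
  refine ⟨NormedSpace.normalize v, NormedSpace.norm_normalize_eq_one_iff.2 hv0, ?_, ?_⟩
  · rw [NormedSpace.normalize, real_inner_smul_right, hcv, mul_zero]
  · rw [greatCircle, ← hnorm_v, NormedSpace.norm_smul_normalize, hv, add_sub_cancel]

end InnerProductGeometry

open InnerProductGeometry

/-- The intrinsic (geodesic) distance from `x` to the subsphere `[c,r]` equals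
`|arccos(x·c) − r|`. -/
theorem intrinsic_dist_to_subsphere {m : ℕ}
    (x c : EuclideanSpace ℝ (Fin (m + 1)))
    (hx : ‖x‖ = 1) (hc : ‖c‖ = 1) (hxc : x ≠ c) (hxc' : x ≠ -c)
    (r : ℝ) (hr : r ∈ Set.Ioo 0 Real.pi) :
    sInf ((fun y => Real.arccos ⟪x, y⟫) ''
        {y : EuclideanSpace ℝ (Fin (m + 1)) | ‖y‖ = 1 ∧ ⟪y, c⟫ = Real.cos r})
      = |Real.arccos ⟪x, c⟫ - r| := by
  obtain ⟨u, hu, hcu, hx_eq⟩ := exists_eq_greatCircle_angle hx hc hxc hxc'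
  rw [← angle_eq_arccos_inner_of_norm_eq_one hx hc]
  refine IsLeast.csInf_eq ⟨⟨greatCircle c u r, ⟨norm_greatCircle hc hu hcu r,
    inner_greatCircle_left hc hcu r⟩, ?_⟩, ?_⟩
  · have hinner : ⟪x, greatCircle c u r⟫ = cos (angle x c - r) := by
      conv_lhs => rw [hx_eq]
      exact inner_greatCircle hc hu hcu (angle x c) r
    have hdist : |angle x c - r| ≤ π :=
      abs_le.2 ⟨by linarith [angle_nonneg x c, hr.2], by linarith [angle_le_pi x c, hr.1]⟩
    beta_reduce
    rw [hinner, ← cos_abs, arccos_cos (abs_nonneg _) hdist]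
  · rintro _ ⟨y, ⟨hy, hyc⟩, rfl⟩
    have hyr : angle y c = r := by
      rw [angle_eq_arccos_inner_of_norm_eq_one hy hc, hyc, arccos_cos hr.1.le hr.2.le]
    beta_reduce
    rw [← hyr, ← angle_eq_arccos_inner_of_norm_eq_one hx hy]
    exact abs_angle_sub_angle_le x y c
end

section
/- For x ∈ S^m with x ≠ ±c, the Euclidean (extrinsic) distance from x to the subsphere [c,r] satisfies ρ_E(x,[c,r])² = 2 − 2(x·c · cos r + √(1 − (x·c)²) · sin r). -/
/-!
Write `t = ⟪x, c⟫` and split `x = t • c + w` with `w ⊥ c`, `‖w‖ = √(1 - t²)`. A point `y` of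
`[c, r]` splits likewise as `cos r • c + v` with `‖v‖ = sin r`, so Cauchy–Schwarz on `⟪w, v⟫` gives
`⟪x, y⟫ ≤ t cos r + √(1 - t²) sin r`, with equality at `y = cos r • c + sin r • (w / ‖w‖)`; this
needs `w ≠ 0`, i.e. `x ≠ ±c`. On the unit sphere `‖x - y‖² = 2 - 2⟪x, y⟫`, so this `y` is the
nearest point of `[c, r]`.
-/

open RealInnerProductSpace

section UnitSphere

variable {E : Type*} [NormedAddCommGroup E] [InnerProductSpace ℝ E]

lemma norm_sub_sq_eq_two_sub_two_inner {x y : E} (hx : ‖x‖ = 1) (hy : ‖y‖ = 1) :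
    ‖x - y‖ ^ 2 = 2 - 2 * ⟪x, y⟫ := by
  rw [norm_sub_sq_real, hx, hy]
  ring

lemma isLeast_image_norm_sub_of_real_inner_le {x y₀ : E} {S : Set E} (hx : ‖x‖ = 1)
    (hle : ∀ y ∈ S, ⟪x, y⟫ ≤ ⟪x, y₀⟫) (hS : ∀ y ∈ S, ‖y‖ = 1) (hy₀ : y₀ ∈ S) :
    IsLeast ((fun y => ‖x - y‖) '' S) ‖x - y₀‖ := by
  refine ⟨⟨y₀, hy₀, rfl⟩, ?_⟩
  rintro _ ⟨y, hy, rfl⟩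
  rw [← sq_le_sq₀ (norm_nonneg _) (norm_nonneg _), norm_sub_sq_eq_two_sub_two_inner hx (hS y hy),
    norm_sub_sq_eq_two_sub_two_inner hx (hS y₀ hy₀)]
  linarith [hle y hy]

lemma real_inner_sq_lt_one_of_ne {x c : E} (hx : ‖x‖ = 1) (hc : ‖c‖ = 1)
    (hxc : x ≠ c) (hxc' : x ≠ -c) : ⟪x, c⟫ ^ 2 < 1 := by
  have hle : |⟪x, c⟫| ≤ 1 := by simpa [hx, hc] using abs_real_inner_le_norm x c
  have hne : |⟪x, c⟫| ≠ 1 := by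
    rw [Ne, abs_eq zero_le_one, inner_eq_one_iff_of_norm_eq_one hx hc,
      inner_eq_neg_one_iff_of_norm_eq_one hx hc]
    tauto
  exact (sq_lt_one_iff_abs_lt_one _).mpr (hle.lt_of_ne hne)

variable {c : E}

lemma real_inner_sub_inner_smul_self (hc : ‖c‖ = 1) (x : E) : ⟪x - ⟪x, c⟫ • c, c⟫ = 0 := by
  rw [inner_sub_left, real_inner_smul_left, real_inner_self_eq_norm_sq, hc]
  ring

lemma norm_sub_inner_smul_self (hc : ‖c‖ = 1) (x : E) :
    ‖x - ⟪x, c⟫ • c‖ = √(‖x‖ ^ 2 - ⟪x, c⟫ ^ 2) := by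
  have h := norm_add_sq_real (x - ⟪x, c⟫ • c) (⟪x, c⟫ • c)
  rw [real_inner_smul_right, real_inner_sub_inner_smul_self hc, sub_add_cancel, norm_smul, hc,
    mul_one, Real.norm_eq_abs, sq_abs] at h
  rw [h, mul_zero, mul_zero, add_zero, add_sub_cancel_right, Real.sqrt_sq (norm_nonneg _)]

lemma real_inner_eq_inner_mul_inner_add_inner_sub (hc : ‖c‖ = 1) (x y : E) :
    ⟪x, y⟫ = ⟪x, c⟫ * ⟪y, c⟫ + ⟪x - ⟪x, c⟫ • c, y - ⟪y, c⟫ • c⟫ := by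
  simp only [inner_sub_left, inner_sub_right, real_inner_smul_left, real_inner_smul_right,
    real_inner_self_eq_norm_sq, hc, real_inner_comm c]
  ring

/-- The spherical triangle inequality `∠(x, y) ≥ |∠(x, c) - ∠(y, c)|`, in cosine form. -/
lemma real_inner_le_inner_mul_inner_add_sqrt_mul_sqrt (hc : ‖c‖ = 1) {x y : E}
    (hx : ‖x‖ = 1) (hy : ‖y‖ = 1) :
    ⟪x, y⟫ ≤ ⟪x, c⟫ * ⟪y, c⟫ + √(1 - ⟪x, c⟫ ^ 2) * √(1 - ⟪y, c⟫ ^ 2) := by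
  have h := real_inner_le_norm (x - ⟪x, c⟫ • c) (y - ⟪y, c⟫ • c)
  rw [norm_sub_inner_smul_self hc, norm_sub_inner_smul_self hc, hx, hy, one_pow] at h
  rw [real_inner_eq_inner_mul_inner_add_inner_sub hc x y]
  linarith

lemma exists_norm_eq_one_inner_eq (hc : ‖c‖ = 1) {x : E} (hx : ‖x‖ = 1)
    (hxc : ⟪x, c⟫ ^ 2 < 1) {a b : ℝ} (hab : a ^ 2 + b ^ 2 = 1) :
    ∃ y : E, ‖y‖ = 1 ∧ ⟪y, c⟫ = a ∧ ⟪x, y⟫ = ⟪x, c⟫ * a + √(1 - ⟪x, c⟫ ^ 2) * b := by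
  set s := √(1 - ⟪x, c⟫ ^ 2)
  have hs : 0 < s := Real.sqrt_pos.mpr (sub_pos.mpr hxc)
  have hs2 : s ^ 2 = 1 - ⟪x, c⟫ ^ 2 := Real.sq_sqrt (sub_pos.mpr hxc).le
  set u := s⁻¹ • (x - ⟪x, c⟫ • c)
  have hu : ‖u‖ = 1 := by
    rw [norm_smul, norm_sub_inner_smul_self hc, hx, one_pow, norm_inv, Real.norm_eq_abs,
      abs_of_pos hs, inv_mul_cancel₀ hs.ne']
  have huc : ⟪u, c⟫ = 0 := by
    rw [real_inner_smul_left, real_inner_sub_inner_smul_self hc, mul_zero]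
  have hxu : ⟪x, u⟫ = s := by
    rw [real_inner_smul_right, inner_sub_right, real_inner_smul_right,
      real_inner_self_eq_norm_sq, hx]
    field_simp
    linear_combination -hs2
  refine ⟨a • c + b • u, ?_, ?_, ?_⟩
  · have h := norm_add_sq_real (a • c) (b • u)
    rw [real_inner_smul_left, real_inner_smul_right, real_inner_comm, huc, norm_smul, norm_smul,
      hc, hu, Real.norm_eq_abs, Real.norm_eq_abs] at h
    refine (pow_eq_one_iff_of_nonneg (norm_nonneg _) two_ne_zero).mp ?_
    rw [h, mul_one, mul_one, sq_abs, sq_abs, mul_zero, mul_zero, mul_zero, add_zero, hab]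
  · rw [inner_add_left, real_inner_smul_left, real_inner_smul_left, huc,
      real_inner_self_eq_norm_sq, hc]
    ring
  · rw [inner_add_right, real_inner_smul_right, real_inner_smul_right, hxu]
    ring

end UnitSphere

/-- The squared extrinsic (Euclidean) distance from `x` to the subsphere `[c,r]`
equals `2 − 2(x·c · cos r + √(1 − (x·c)²) · sin r)`. -/
theorem extrinsic_dist_sq_to_subsphere {m : ℕ}
    (x c : EuclideanSpace ℝ (Fin (m + 1)))
    (hx : ‖x‖ = 1) (hc : ‖c‖ = 1) (hxc : x ≠ c) (hxc' : x ≠ -c)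
    (r : ℝ) (hr : r ∈ Set.Ioo 0 Real.pi) :
    (sInf ((fun y => ‖x - y‖) ''
        {y : EuclideanSpace ℝ (Fin (m + 1)) | ‖y‖ = 1 ∧ ⟪y, c⟫ = Real.cos r})) ^ 2
      = 2 - 2 * (⟪x, c⟫ * Real.cos r + Real.sqrt (1 - ⟪x, c⟫ ^ 2) * Real.sin r) := by
  have hsin : √(1 - Real.cos r ^ 2) = Real.sin r :=
    (Real.sin_eq_sqrt_one_sub_cos_sq hr.1.le hr.2.le).symm
  obtain ⟨y₀, hy₀, hy₀c, hxy₀⟩ := exists_norm_eq_one_inner_eq hc hx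
    (real_inner_sq_lt_one_of_ne hx hc hxc hxc') (Real.cos_sq_add_sin_sq r)
  have hmax : ∀ y ∈ {y : EuclideanSpace ℝ (Fin (m + 1)) | ‖y‖ = 1 ∧ ⟪y, c⟫ = Real.cos r},
      ⟪x, y⟫ ≤ ⟪x, y₀⟫ := by
    rintro y ⟨hy, hyc⟩
    rw [hxy₀, ← hsin, ← hyc]
    exact real_inner_le_inner_mul_inner_add_sqrt_mul_sqrt hc hx hy
  rw [(isLeast_image_norm_sub_of_real_inner_le hx hmax (fun y hy => hy.1) ⟨hy₀, hy₀c⟩).csInf_eq,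
    norm_sub_sq_eq_two_sub_two_inner hx hy₀, hxy₀]
end

section
/- Define on P₀ = S^m × (0,π)^K the function d(p₁,p₂) = min{d₁(p₁,p₂), d₂(p₁,p₂)} where d₁(p₁,p₂) = √(arccos(c₁·c₂)² + ‖r¹ − r²‖²) and d₂(p₁,p₂) = √(arccos(−c₁·c₂)² + ‖(π·1 − r¹) − r²‖²), for pᵢ = (cᵢ, rⁱ). Then d satisfies the triangle inequality: d(p₁,p₂) ≤ d(p₁,p₃) + d(p₃,p₂) for all p₁, p₂, p₃ ∈ P₀. -/
open RealInnerProductSpace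

noncomputable def subsphereDistOne {m K : ℕ}
    (p q : EuclideanSpace ℝ (Fin (m + 1)) × (Fin K → ℝ)) : ℝ :=
  Real.sqrt (Real.arccos ⟪p.1, q.1⟫ ^ 2 + ∑ j, (p.2 j - q.2 j) ^ 2)

noncomputable def subsphereDistTwo {m K : ℕ}
    (p q : EuclideanSpace ℝ (Fin (m + 1)) × (Fin K → ℝ)) : ℝ :=
  Real.sqrt (Real.arccos (-⟪p.1, q.1⟫) ^ 2 + ∑ j, ((Real.pi - p.2 j) - q.2 j) ^ 2)

noncomputable def subsphereDist {m K : ℕ}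
    (p q : EuclideanSpace ℝ (Fin (m + 1)) × (Fin K → ℝ)) : ℝ :=
  min (subsphereDistOne p q) (subsphereDistTwo p q)

/-!
On unit vectors `arccos ⟪c, c'⟫` is the angle between `c` and `c'`, so `d₁` is the ℓ²-product
of the angular distance on the sphere, which satisfies the triangle inequality, and the
Euclidean distance on `ℝ^K`; hence `d₁` satisfies the triangle inequality. The flip
`σ (c, r) = (-c, π·1 - r)` is an involutive isometry of `d₁` with `d₂ (p, q) = d₁ (σ p, q)`,
so `d (p, q) = min (d₁ (p, q)) (d₁ (σ p, q))` is the distance between the `σ`-orbits of `p`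
and `q`, and such an orbit distance inherits the triangle inequality.
-/

theorem min_involutive_triangle {X : Type*} {δ : X → X → ℝ} {σ : X → X}
    (hσ : Function.Involutive σ) (hδσ : ∀ x y, δ (σ x) (σ y) = δ x y)
    (hδ : ∀ x y z, δ x z ≤ δ x y + δ y z) (x y z : X) :
    min (δ x z) (δ (σ x) z) ≤ min (δ x y) (δ (σ x) y) + min (δ y z) (δ (σ y) z) := by
  have hσ_swap : ∀ u v, δ (σ u) v = δ u (σ v) := fun u v => by
    rw [← hδσ u (σ v), hσ v]
  rcases min_choice (δ x y) (δ (σ x) y) with hxy | hxy <;>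
    rcases min_choice (δ y z) (δ (σ y) z) with hyz | hyz <;>
    rw [hxy, hyz]
  · exact min_le_of_left_le (hδ x y z)
  · rw [hσ_swap y z]
    exact min_le_of_right_le ((hσ_swap x z).trans_le (hδ x y (σ z)))
  · exact min_le_of_right_le (hδ (σ x) y z)
  · rw [hσ_swap y z]
    exact min_le_of_left_le ((hδσ x z).symm.trans_le (hδ (σ x) y (σ z)))

theorem Real.sqrt_sq_add_sq_le_add {a b a₁ b₁ a₂ b₂ : ℝ} (ha : 0 ≤ a) (hb : 0 ≤ b)
    (ha₁₂ : a ≤ a₁ + a₂) (hb₁₂ : b ≤ b₁ + b₂) :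
    √(a ^ 2 + b ^ 2) ≤ √(a₁ ^ 2 + b₁ ^ 2) + √(a₂ ^ 2 + b₂ ^ 2) := by
  calc √(a ^ 2 + b ^ 2) ≤ √((a₁ + a₂) ^ 2 + (b₁ + b₂) ^ 2) := by gcongr
    _ = ‖(a₁ + b₁ * Complex.I) + (a₂ + b₂ * Complex.I)‖ := by
      rw [← Complex.norm_add_mul_I]; push_cast; ring_nf
    _ ≤ _ := (norm_add_le _ _).trans_eq (by simp only [Complex.norm_add_mul_I])

namespace InnerProductGeometry

variable {V E : Type*} [NormedAddCommGroup V] [InnerProductSpace ℝ V] [PseudoMetricSpace E]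

theorem arccos_inner_eq_angle_of_norm_eq_one {x y : V} (hx : ‖x‖ = 1) (hy : ‖y‖ = 1) :
    Real.arccos ⟪x, y⟫ = angle x y := by
  rw [inner_eq_cos_angle_of_norm_eq_one hx hy,
    Real.arccos_cos (angle_nonneg x y) (angle_le_pi x y)]

noncomputable def angleProdDist (p q : V × E) : ℝ :=
  √(angle p.1 q.1 ^ 2 + dist p.2 q.2 ^ 2)

theorem angleProdDist_triangle (p q r : V × E) :
    angleProdDist p r ≤ angleProdDist p q + angleProdDist q r :=
  Real.sqrt_sq_add_sq_le_add (angle_nonneg _ _) dist_nonneg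
    (angle_le_angle_add_angle _ _ _) (dist_triangle _ _ _)

theorem angleProdDist_neg_isometry {f : E → E} (hf : Isometry f) (p q : V × E) :
    angleProdDist (-p.1, f p.2) (-q.1, f q.2) = angleProdDist p q := by
  simp only [angleProdDist, angle_neg_neg, hf.dist_eq]

end InnerProductGeometry

open InnerProductGeometry

def toEuclideanProd {V ι : Type*} (p : V × (ι → ℝ)) : V × EuclideanSpace ℝ ι :=
  (p.1, WithLp.toLp 2 p.2)

section Subsphere

variable {V ι : Type*} [NormedAddCommGroup V]

noncomputable def subsphereFlip (p : V × EuclideanSpace ℝ ι) : V × EuclideanSpace ℝ ι :=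
  (-p.1, WithLp.toLp 2 (fun _ => Real.pi) - p.2)

theorem subsphereFlip_involutive : Function.Involutive (subsphereFlip (V := V) (ι := ι)) :=
  fun p => by simp [subsphereFlip]

variable [InnerProductSpace ℝ V] [Fintype ι]

theorem angleProdDist_subsphereFlip (p q : V × EuclideanSpace ℝ ι) :
    angleProdDist (subsphereFlip p) (subsphereFlip q) = angleProdDist p q :=
  angleProdDist_neg_isometry (Isometry.of_dist_eq fun _ _ => dist_sub_left _ _ _) p q

variable {m K : ℕ} {p q : EuclideanSpace ℝ (Fin (m + 1)) × (Fin K → ℝ)}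

theorem subsphereDistOne_eq_angleProdDist (hp : ‖p.1‖ = 1) (hq : ‖q.1‖ = 1) :
    subsphereDistOne p q = angleProdDist (toEuclideanProd p) (toEuclideanProd q) := by
  simp only [subsphereDistOne, angleProdDist, toEuclideanProd, EuclideanSpace.dist_sq_eq,
    Real.dist_eq, sq_abs, arccos_inner_eq_angle_of_norm_eq_one hp hq]

theorem subsphereDistTwo_eq_angleProdDist (hp : ‖p.1‖ = 1) (hq : ‖q.1‖ = 1) :
    subsphereDistTwo p q =
      angleProdDist (subsphereFlip (toEuclideanProd p)) (toEuclideanProd q) := by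
  have hp' : ‖-p.1‖ = 1 := by rwa [norm_neg]
  simp only [subsphereDistTwo, angleProdDist, subsphereFlip, toEuclideanProd,
    EuclideanSpace.dist_sq_eq, Real.dist_eq, sq_abs, ← inner_neg_left,
    arccos_inner_eq_angle_of_norm_eq_one hp' hq, PiLp.sub_apply]

theorem subsphereDist_eq_min (hp : ‖p.1‖ = 1) (hq : ‖q.1‖ = 1) :
    subsphereDist p q = min (angleProdDist (toEuclideanProd p) (toEuclideanProd q))
      (angleProdDist (subsphereFlip (toEuclideanProd p)) (toEuclideanProd q)) := by
  rw [subsphereDist, subsphereDistOne_eq_angleProdDist hp hq,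
    subsphereDistTwo_eq_angleProdDist hp hq]

end Subsphere

theorem subsphereDist_triangle_general {m K : ℕ}
    (p₁ p₂ p₃ : EuclideanSpace ℝ (Fin (m + 1)) × (Fin K → ℝ))
    (h₁ : ‖p₁.1‖ = 1 ∧ ∀ j, p₁.2 j ∈ Set.Ioo 0 Real.pi)
    (h₂ : ‖p₂.1‖ = 1 ∧ ∀ j, p₂.2 j ∈ Set.Ioo 0 Real.pi)
    (h₃ : ‖p₃.1‖ = 1 ∧ ∀ j, p₃.2 j ∈ Set.Ioo 0 Real.pi) :
    subsphereDist p₁ p₂ ≤ subsphereDist p₁ p₃ + subsphereDist p₃ p₂ := by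
  rw [subsphereDist_eq_min h₁.1 h₂.1, subsphereDist_eq_min h₁.1 h₃.1,
    subsphereDist_eq_min h₃.1 h₂.1]
  exact min_involutive_triangle subsphereFlip_involutive angleProdDist_subsphereFlip
    angleProdDist_triangle _ _ _

/-- The distance `d = min{d₁, d₂}` on `P₀ = S^m × (0,π)^K` satisfies the
triangle inequality. -/
theorem subsphereDist_triangle {m K : ℕ} (hK : 1 ≤ K)
    (p₁ p₂ p₃ : EuclideanSpace ℝ (Fin (m + 1)) × (Fin K → ℝ))
    (h₁ : ‖p₁.1‖ = 1 ∧ ∀ j, p₁.2 j ∈ Set.Ioo 0 Real.pi)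
    (h₂ : ‖p₂.1‖ = 1 ∧ ∀ j, p₂.2 j ∈ Set.Ioo 0 Real.pi)
    (h₃ : ‖p₃.1‖ = 1 ∧ ∀ j, p₃.2 j ∈ Set.Ioo 0 Real.pi) :
    subsphereDist p₁ p₂ ≤ subsphereDist p₁ p₃ + subsphereDist p₃ p₂ :=
  subsphereDist_triangle_general p₁ p₂ p₃ h₁ h₂ h₃
end
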